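/- arXiv:1911.05501 — 2 statements merged into one kernel-verified Lean document; each statement's English description precedes it below -/
import Mathlib

section
/- Let H be a multigraph in which every vertex has degree at most D and any two vertices are joined by at most μ parallel edges. Then the edge set of H can be decomposed into at most D + μ matchings. -/
/-!
Take a proper partial coloring with `D + μ` colors and as few uncolored edges as possible, and
suppose the edge `e₀ = u v₀` is uncolored. The multifan at `u` consists of `e₀` and, recursively,
the edges at `u` whose color is missing at the far end of an earlier fan edge. Minimality gives:

* a color missing at a fan vertex is present at `u` (otherwise rotate the fan and color it);
* if the fan vertex `v` misses `a` and `u` misses `b`, the `a`/`b` Kempe chain through the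
  `b`-edge at `v` reaches `u` (otherwise swap it and apply the first point);
* hence distinct fan vertices miss disjoint sets of colors, since two such chains would meet in
  the unique `a`-edge at `u`, and a connected graph of maximum degree two has at most two leaves.

Every fan vertex misses at least `μ` colors and `v₀` at least `μ + 1`, and all these colors sit on
distinct fan edges other than `e₀`; but each fan vertex is joined to `u` by at most `μ` edges.
-/

open Finset

theorem SimpleGraph.Reachable.exists_adj_dist_lt {W : Type*} {G : SimpleGraph W} {u v : W}
    (h : G.Reachable u v) (hne : u ≠ v) : ∃ w, G.Adj v w ∧ G.dist u w < G.dist u v := by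
  obtain ⟨p, hp⟩ := h.symm.exists_walk_length_eq_dist
  have hp' : ¬ p.Nil := SimpleGraph.Walk.not_nil_of_ne hne.symm
  refine ⟨p.snd, p.adj_snd hp', ?_⟩
  calc G.dist u p.snd = G.dist p.snd u := SimpleGraph.dist_comm
    _ ≤ p.tail.length := SimpleGraph.dist_le _
    _ < p.length := by rw [← p.length_tail_add_one hp']; omega
    _ = G.dist u v := hp.trans SimpleGraph.dist_comm

namespace VizingMultigraph

variable {V E α : Type*} (ends : E → Sym2 V)

lemma eq_or_eq_of_mem {z : Sym2 V} {x y w : V} (hx : x ∈ z) (hy : y ∈ z) (hxy : x ≠ y)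
    (hw : w ∈ z) : w = x ∨ w = y :=
  Sym2.mem_iff.mp ((Sym2.mem_and_mem_iff hxy).mp ⟨hx, hy⟩ ▸ hw)

section EdgeSets

variable [DecidableEq V]

def verts (K : Finset E) : Finset V :=
  K.biUnion fun e => (ends e).toFinset

variable {ends}

@[simp]
lemma mem_verts {K : Finset E} {x : V} : x ∈ verts ends K ↔ ∃ e ∈ K, x ∈ ends e := by
  simp [verts]

lemma sum_card_filter_mem_verts (hloop : ∀ e, ¬ (ends e).IsDiag) (K : Finset E) :
    ∑ x ∈ verts ends K, #(K.filter (x ∈ ends ·)) = 2 * #K := by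
  calc ∑ x ∈ verts ends K, #(K.filter (x ∈ ends ·))
      = ∑ e ∈ K, #((verts ends K).bipartiteBelow (fun x e => x ∈ ends e) e) :=
        sum_card_bipartiteAbove_eq_sum_card_bipartiteBelow _
    _ = ∑ _e ∈ K, 2 := ?_
    _ = 2 * #K := by rw [sum_const, smul_eq_mul, mul_comm]
  refine sum_congr rfl fun e he => ?_
  rw [← Sym2.card_toFinset_of_not_isDiag _ (hloop e), bipartiteBelow]
  congr 1
  ext x
  simp only [mem_filter, mem_verts, Sym2.mem_toFinset]
  exact ⟨And.right, fun hx => ⟨⟨e, he, hx⟩, hx⟩⟩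

lemma card_verts_le_card_add_one {G : SimpleGraph E}
    (hG : ∀ e f, G.Adj e f → ∃ w, w ∈ ends e ∧ w ∈ ends f) {g : E} {K : Finset E}
    (hK : ∀ e, e ∈ K ↔ G.Reachable g e) : #(verts ends K) ≤ #K + 1 := by
  obtain ⟨v, hv⟩ : ∃ v, v ∈ ends g := Sym2.inductionOn (ends g) fun x _ => ⟨x, Sym2.mem_mk_left x _⟩
  -- charge every vertex other than `v` to an incident edge of `K` closest to `g`
  have hclosest : ∀ x ∈ (verts ends K).erase v, ∃ e ∈ K, x ∈ ends e ∧
      ∀ e' ∈ K, x ∈ ends e' → G.dist g e ≤ G.dist g e' := by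
    intro x hx
    obtain ⟨e, he, hxe⟩ := mem_verts.mp (mem_of_mem_erase hx)
    obtain ⟨e, he', hmin⟩ := exists_min_image (K.filter (x ∈ ends ·)) (G.dist g)
      ⟨e, mem_filter.mpr ⟨he, hxe⟩⟩
    rw [mem_filter] at he'
    exact ⟨e, he'.1, he'.2, fun e' he' hxe' => hmin e' (mem_filter.mpr ⟨he', hxe'⟩)⟩
  have : Nonempty E := ⟨g⟩
  choose! F hFK hFx hFmin using hclosest
  have hinj : Set.InjOn F (((verts ends K).erase v : Finset V) : Set V) := by
    intro x hx x' hx' hxx'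
    by_contra hne
    have hx'F : x' ∈ ends (F x) := hxx' ▸ hFx x' hx'
    have hreach : G.Reachable g (F x) := (hK _).mp (hFK x hx)
    have hg : g ≠ F x := by
      rintro rfl
      rcases eq_or_eq_of_mem (hFx x hx) hx'F hne hv with rfl | rfl
      exacts [ne_of_mem_erase hx rfl, ne_of_mem_erase hx' rfl]
    obtain ⟨e', hadj, hlt⟩ := hreach.exists_adj_dist_lt hg
    have he'K : e' ∈ K := (hK e').mpr (hreach.trans hadj.reachable)
    obtain ⟨w, hw, hwe'⟩ := hG _ _ hadj
    rcases eq_or_eq_of_mem (hFx x hx) hx'F hne hw with rfl | rfl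
    · exact (hFmin w hx e' he'K hwe').not_gt hlt
    · exact (hxx' ▸ hFmin w hx' e' he'K hwe').not_gt hlt
  calc #(verts ends K) ≤ #((verts ends K).erase v) + 1 := by
        have := pred_card_le_card_erase (s := verts ends K) (a := v)
        omega
    _ ≤ #K + 1 := by
        gcongr
        exact card_le_card_of_injOn F (fun x hx => hFK x hx) hinj

lemma card_le_two_of_leaves (hloop : ∀ e, ¬ (ends e).IsDiag) {K : Finset E}
    (hK : #(verts ends K) ≤ #K + 1) (hdeg : ∀ x, #(K.filter (x ∈ ends ·)) ≤ 2) {T : Finset V}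
    (hT : T ⊆ verts ends K) (hleaf : ∀ x ∈ T, #(K.filter (x ∈ ends ·)) ≤ 1) : #T ≤ 2 := by
  have hsum := sum_card_filter_mem_verts hloop K
  rw [← sum_sdiff hT] at hsum
  have hT₁ : ∑ x ∈ T, #(K.filter (x ∈ ends ·)) ≤ #T * 1 := by
    simpa using sum_le_card_nsmul T _ 1 hleaf
  have hT₂ : ∑ x ∈ verts ends K \ T, #(K.filter (x ∈ ends ·)) ≤ #(verts ends K \ T) * 2 := by
    simpa using sum_le_card_nsmul _ _ 2 fun x _ => hdeg x
  have := card_sdiff_add_card_eq_card hT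
  omega

end EdgeSets

/-- Partial edge colorings are maps `E → Option α`, with `none` for an uncolored edge. -/
def Proper (c : E → Option α) : Prop :=
  ∀ ⦃e f : E⦄, e ≠ f → (∃ w, w ∈ ends e ∧ w ∈ ends f) → ∀ ⦃γ : α⦄, c e = some γ → c f ≠ some γ

def Missing (c : E → Option α) (x : V) (γ : α) : Prop :=
  ∀ ⦃e : E⦄, x ∈ ends e → c e ≠ some γ

def uncolored [Fintype E] (c : E → Option α) : Finset E :=
  univ.filter fun e => (c e).isNone

noncomputable def missingColors [Fintype α] (c : E → Option α) (x : V) : Finset α := by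
  classical exact univ.filter (Missing ends c x)

def IsMinimal [Fintype E] (c : E → Option α) : Prop :=
  Proper ends c ∧ ∀ c' : E → Option α, Proper ends c' → #(uncolored c) ≤ #(uncolored c')

section Coloring

variable {ends} {c : E → Option α}

@[simp]
lemma mem_uncolored [Fintype E] {e : E} : e ∈ uncolored c ↔ c e = none := by
  simp [uncolored]

@[simp]
lemma mem_missingColors [Fintype α] {x : V} {γ : α} :
    γ ∈ missingColors ends c x ↔ Missing ends c x γ := by
  simp [missingColors]

lemma exists_of_not_missing {x : V} {γ : α} (h : ¬ Missing ends c x γ) :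
    ∃ e, x ∈ ends e ∧ c e = some γ := by
  simpa [Missing] using h

lemma card_le_card_of_forall_exists_eq_some {S : Finset α} {T : Finset E}
    (h : ∀ γ ∈ S, ∃ e ∈ T, c e = some γ) : #S ≤ #T := by
  classical
  calc #S = #(S.image some) := (card_image_of_injective _ (Option.some_injective _)).symm
    _ ≤ #(T.image c) := card_le_card fun o ho => by
        obtain ⟨γ, hγ, rfl⟩ := mem_image.mp ho
        obtain ⟨e, he, hce⟩ := h γ hγ
        exact mem_image.mpr ⟨e, he, hce⟩
    _ ≤ #T := card_image_le

lemma forall_missing_of_mem {f : E} {u v : V} (hu : u ∈ ends f) (hv : v ∈ ends f) (huv : u ≠ v)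
    {γ : α} (hu' : Missing ends c u γ) (hv' : Missing ends c v γ) :
    ∀ w ∈ ends f, Missing ends c w γ := fun _ hw =>
  (eq_or_eq_of_mem hu hv huv hw).elim (· ▸ hu') (· ▸ hv')

lemma Proper.eq_of_mem_of_mem (hc : Proper ends c) {e f : E} {x : V} (he : x ∈ ends e)
    (hf : x ∈ ends f) {γ : α} (hce : c e = some γ) (hcf : c f = some γ) : e = f :=
  by_contra fun hne => hc hne ⟨x, he, hf⟩ hce hcf

lemma Proper.update_of_missing [DecidableEq E] (hc : Proper ends c) {f : E} {γ : α}
    (hf : ∀ w ∈ ends f, Missing ends c w γ) : Proper ends (Function.update c f (some γ)) := by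
  intro e e' hne ⟨w, hwe, hwe'⟩ δ he he'
  rcases eq_or_ne e f with rfl | hef
  · rw [Function.update_self, Option.some_inj] at he
    rw [Function.update_of_ne hne.symm, ← he] at he'
    exact hf w hwe hwe' he'
  rcases eq_or_ne e' f with rfl | he'f
  · rw [Function.update_self, Option.some_inj] at he'
    rw [Function.update_of_ne hne, ← he'] at he
    exact hf w hwe' hwe he
  rw [Function.update_of_ne hef] at he
  rw [Function.update_of_ne he'f] at he'
  exact hc hne ⟨w, hwe, hwe'⟩ he he'

lemma uncolored_update_some [Fintype E] [DecidableEq E] (f : E) (γ : α) :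
    uncolored (Function.update c f (some γ)) = (uncolored c).erase f := by
  ext e
  rcases eq_or_ne e f with rfl | h <;> simp [*]

lemma Missing.update [DecidableEq E] {x : V} {δ γ : α} (h : Missing ends c x δ) (hδγ : δ ≠ γ)
    (f : E) : Missing ends (Function.update c f (some γ)) x δ := by
  intro y hy hyδ
  rcases eq_or_ne y f with rfl | hyf
  · rw [Function.update_self, Option.some_inj] at hyδ
    exact hδγ hyδ.symm
  · rw [Function.update_of_ne hyf] at hyδ
    exact h hy hyδ

lemma Proper.missing_update_of_mem [DecidableEq E] (hc : Proper ends c) {f : E} {x : V}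
    (hx : x ∈ ends f) {δ γ : α} (hcf : c f = some δ) (hδγ : δ ≠ γ) :
    Missing ends (Function.update c f (some γ)) x δ := by
  intro y hy hyδ
  rcases eq_or_ne y f with rfl | hyf
  · rw [Function.update_self, Option.some_inj] at hyδ
    exact hδγ hyδ.symm
  · rw [Function.update_of_ne hyf] at hyδ
    exact hyf (hc.eq_of_mem_of_mem hy hx hyδ hcf)

lemma IsMinimal.of_uncolored_eq [Fintype E] (hc : IsMinimal ends c) {c' : E → Option α}
    (hc' : Proper ends c') (h : uncolored c' = uncolored c) : IsMinimal ends c' :=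
  ⟨hc', h ▸ hc.2⟩

lemma IsMinimal.not_forall_missing [Fintype E] [DecidableEq E] (hc : IsMinimal ends c) {e : E}
    (he : c e = none) (γ : α) : ¬ ∀ w ∈ ends e, Missing ends c w γ := by
  intro hγ
  have hle := hc.2 _ (hc.1.update_of_missing hγ)
  rw [uncolored_update_some, card_erase_of_mem (mem_uncolored.mpr he)] at hle
  have : 0 < #(uncolored c) := card_pos.mpr ⟨e, mem_uncolored.mpr he⟩
  omega

variable (ends) in
lemma exists_isMinimal [Fintype E] : ∃ c : E → Option α, IsMinimal ends c := by
  obtain ⟨c, hc, hmin⟩ := (measure fun c : E → Option α => #(uncolored c)).wf.has_min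
    {c | Proper ends c} ⟨fun _ => none, fun _ _ _ _ _ h => by simp at h⟩
  exact ⟨c, hc, fun c' hc' => not_lt.mp (hmin c' hc')⟩

variable [DecidableEq V]

lemma Proper.card_filter_mem_le (hc : Proper ends c) (K : Finset E) (x : V)
    {S : Finset α} (hS : ∀ e ∈ K, x ∈ ends e → ∃ γ ∈ S, c e = some γ) :
    #(K.filter (x ∈ ends ·)) ≤ #S := by
  classical
  calc #(K.filter (x ∈ ends ·)) ≤ #(S.image some) := by
        refine card_le_card_of_injOn c (fun e he => ?_) fun e he e' he' hee' => ?_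
        · obtain ⟨γ, hγ, hce⟩ := hS e (mem_filter.mp he).1 (mem_filter.mp he).2
          exact mem_image.mpr ⟨γ, hγ, hce.symm⟩
        · obtain ⟨γ, -, hce⟩ := hS e (mem_filter.mp he).1 (mem_filter.mp he).2
          exact hc.eq_of_mem_of_mem (mem_filter.mp he).2 (mem_filter.mp he').2 hce (hee' ▸ hce)
    _ ≤ #S := card_image_le

lemma le_card_missingColors [Fintype E] [DecidableEq E] [Fintype α] (c : E → Option α) {x : V}
    {D μ : ℕ} (hdeg : #(univ.filter (x ∈ ends ·)) ≤ D) (hα : D + μ ≤ Fintype.card α) :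
    μ + #(univ.filter (x ∈ ends ·) ∩ uncolored c) ≤ #(missingColors ends c x) := by
  classical
  have hpresent : #(missingColors ends c x)ᶜ ≤ #(univ.filter (x ∈ ends ·) \ uncolored c) :=
    card_le_card_of_forall_exists_eq_some fun γ hγ => by
      obtain ⟨e, hxe, hce⟩ := exists_of_not_missing (by simpa using hγ)
      exact ⟨e, by simp [hxe, hce], hce⟩
  have := card_compl (missingColors ends c x)
  have := card_sdiff_add_card_inter (univ.filter (x ∈ ends ·)) (uncolored c)
  have := card_le_univ (missingColors ends c x)
  omega

end Coloring

/-- Level `n` of the multifan at `u` around the uncolored edge `e₀`. -/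
def FanN (c : E → Option α) (e₀ : E) (u : V) : ℕ → E → Prop
  | 0, f => f = e₀
  | n + 1, f => FanN c e₀ u n f ∨
      (u ∈ ends f ∧ ∃ γ, c f = some γ ∧
        ∃ g w, FanN c e₀ u n g ∧ w ∈ ends g ∧ w ≠ u ∧ Missing ends c w γ)

section Fan

variable {ends} {c : E → Option α} {e₀ : E} {u : V}

lemma FanN.mem_center (hu : u ∈ ends e₀) {n : ℕ} {f : E} (hf : FanN ends c e₀ u n f) :
    u ∈ ends f := by
  induction n generalizing f with
  | zero => exact (hf : f = e₀) ▸ hu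
  | succ n ih => exact hf.elim ih (·.1)

lemma FanN.of_recolor {c' : E → Option α} {n : ℕ}
    (hcol : ∀ x, FanN ends c e₀ u n x → u ∈ ends x → c' x = c x)
    (hmiss : ∀ m < n, ∀ g w γ, FanN ends c e₀ u m g → w ∈ ends g → w ≠ u →
      Missing ends c w γ → ¬ Missing ends c u γ → Missing ends c' w γ)
    {f : E} (hf : FanN ends c e₀ u n f) : FanN ends c' e₀ u n f := by
  induction n generalizing f with
  | zero => exact hf
  | succ n ih =>
    have ih' : ∀ {x}, FanN ends c e₀ u n x → FanN ends c' e₀ u n x := fun hx =>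
      ih (fun x hx => hcol x (Or.inl hx)) (fun m hm => hmiss m (hm.trans n.lt_succ_self)) hx
    rcases id hf with hf' | ⟨hfu, γ, hcf, g, w, hg, hwg, hwu, hw⟩
    · exact Or.inl (ih' hf')
    · exact Or.inr ⟨hfu, γ, (hcol f hf hfu).trans hcf, g, w, ih' hg, hwg, hwu,
        hmiss n n.lt_succ_self g w γ hg hwg hwu hw fun h => h hfu hcf⟩

/-- Rotating the fan: recoloring the last fan edge with a color missing at both of its ends
frees its old color at `u`, and the fan one level down still reaches its predecessor. -/
lemma IsMinimal.not_missing_center_of_missing_fan [Fintype E] [DecidableEq E]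
    (hmin : IsMinimal ends c) (he₀ : c e₀ = none) (hu : u ∈ ends e₀) {n : ℕ} {f : E}
    (hf : FanN ends c e₀ u n f) {v : V} (hv : v ∈ ends f) (hvu : v ≠ u) {γ : α}
    (hvγ : Missing ends c v γ) : ¬ Missing ends c u γ := by
  intro huγ
  induction n generalizing c f v γ with
  | zero =>
    obtain rfl : f = e₀ := hf
    exact hmin.not_forall_missing he₀ γ (forall_missing_of_mem hu hv hvu.symm huγ hvγ)
  | succ n ih =>
    by_cases hfn : FanN ends c e₀ u n f
    · exact ih hmin he₀ hfn hv hvu hvγ huγ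
    obtain ⟨hfu, δ, hcf, g, w, hg, hwg, hwu, hwδ⟩ := hf.resolve_left hfn
    have hfγ := forall_missing_of_mem hfu hv hvu.symm huγ hvγ
    have hδγ : δ ≠ γ := fun h => huγ hfu (h ▸ hcf)
    have hmin₁ : IsMinimal ends (Function.update c f (some γ)) :=
      hmin.of_uncolored_eq (hmin.1.update_of_missing hfγ) <| by
        rw [uncolored_update_some, erase_eq_of_notMem (by simp [hcf])]
    have he₀₁ : Function.update c f (some γ) e₀ = none := by
      rwa [Function.update_of_ne]
      rintro rfl
      simp [hcf] at he₀
    have hg₁ : FanN ends (Function.update c f (some γ)) e₀ u n g :=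
      FanN.of_recolor (fun x hx _ => Function.update_of_ne (fun h : x = f => hfn (h ▸ hx)) _ _)
        (fun _ _ _ _ ε _ _ _ hε hεu => hε.update (fun h : ε = γ => hεu (h ▸ huγ)) f) hg
    exact ih hmin₁ he₀₁ hg₁ hwg hwu (hwδ.update hδγ f) (hmin.1.missing_update_of_mem hfu hcf hδγ)

end Fan

/-- Its connected components are the Kempe chains of the colors `a` and `b`. -/
def kempeGraph (c : E → Option α) (a b : α) : SimpleGraph E where
  Adj e f := e ≠ f ∧ (c e = some a ∨ c e = some b) ∧ (c f = some a ∨ c f = some b) ∧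
    ∃ w, w ∈ ends e ∧ w ∈ ends f
  symm := ⟨fun _ _ ⟨hne, he, hf, w, hwe, hwf⟩ => ⟨hne.symm, hf, he, w, hwf, hwe⟩⟩
  loopless := ⟨fun _ h => h.1 rfl⟩

section Kempe

variable {ends} {c : E → Option α} {a b : α}

lemma colored_of_reachable {g e : E} (hg : c g = some a ∨ c g = some b)
    (h : (kempeGraph ends c a b).Reachable g e) : c e = some a ∨ c e = some b := by
  rcases ((SimpleGraph.reachable_iff_reflTransGen g e).mp h).cases_tail with rfl | ⟨_, _, hadj⟩
  exacts [hg, hadj.2.2.1]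

variable (ends) in
noncomputable def kempeChain [Fintype E] (c : E → Option α) (a b : α) (g : E) : Finset E := by
  classical exact univ.filter ((kempeGraph ends c a b).Reachable g)

lemma mem_kempeChain [Fintype E] {g e : E} :
    e ∈ kempeChain ends c a b g ↔ (kempeGraph ends c a b).Reachable g e := by
  simp [kempeChain]

/-- A Kempe chain is a path or a cycle. -/
lemma Proper.card_le_two_of_missing_kempeChain [Fintype E] [DecidableEq V]
    (hloop : ∀ e, ¬ (ends e).IsDiag) (hc : Proper ends c) {g : E}
    (hg : c g = some a ∨ c g = some b) {T : Finset V}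
    (hT : T ⊆ verts ends (kempeChain ends c a b g))
    (hmiss : ∀ x ∈ T, Missing ends c x a ∨ Missing ends c x b) : #T ≤ 2 := by
  classical
  set K := kempeChain ends c a b g
  have hcol : ∀ e ∈ K, c e = some a ∨ c e = some b := fun e he =>
    colored_of_reachable hg (mem_kempeChain.mp he)
  refine card_le_two_of_leaves hloop (card_verts_le_card_add_one
    (fun e f (hef : (kempeGraph ends c a b).Adj e f) => hef.2.2.2) fun e => mem_kempeChain)
    (fun x => ?_) hT fun x hx => ?_
  · refine (hc.card_filter_mem_le K x (S := {a, b}) fun e he _ => ?_).trans card_le_two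
    rcases hcol e he with h | h <;> simp [h]
  · rcases hmiss x hx with hx | hx
    · exact hc.card_filter_mem_le K x (S := {b}) fun e he hxe =>
        ⟨b, mem_singleton_self _, (hcol e he).resolve_left (hx hxe)⟩
    · exact hc.card_filter_mem_le K x (S := {a}) fun e he hxe =>
        ⟨a, mem_singleton_self _, (hcol e he).resolve_right (hx hxe)⟩

variable [DecidableEq α]

variable (ends) in
open Classical in
noncomputable def kempeSwap (c : E → Option α) (a b : α) (g : E) : E → Option α := fun e =>
  if (kempeGraph ends c a b).Reachable g e then (c e).map (Equiv.swap a b) else c e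

lemma kempeSwap_of_not_reachable {g e : E} (h : ¬ (kempeGraph ends c a b).Reachable g e) :
    kempeSwap ends c a b g e = c e :=
  if_neg h

lemma kempeSwap_eq_some_iff_of_reachable {g e : E} (h : (kempeGraph ends c a b).Reachable g e)
    {γ : α} : kempeSwap ends c a b g e = some γ ↔ c e = some (Equiv.swap a b γ) := by
  rw [kempeSwap, if_pos h, Option.map_eq_some_iff]
  constructor
  · rintro ⟨δ, hδ, rfl⟩
    rw [Equiv.swap_apply_self, hδ]
  · intro h
    exact ⟨_, h, Equiv.swap_apply_self _ _ _⟩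

lemma kempeSwap_eq_none_iff {g e : E} : kempeSwap ends c a b g e = none ↔ c e = none := by
  by_cases h : (kempeGraph ends c a b).Reachable g e
  · rw [kempeSwap, if_pos h, Option.map_eq_none_iff]
  · rw [kempeSwap_of_not_reachable h]

lemma uncolored_kempeSwap [Fintype E] {g : E} :
    uncolored (kempeSwap ends c a b g) = uncolored c := by
  ext e
  simp only [mem_uncolored, kempeSwap_eq_none_iff]

lemma Proper.kempeSwap (hc : Proper ends c) (g : E) : Proper ends (kempeSwap ends c a b g) := by
  set G := kempeGraph ends c a b
  have key : ∀ ⦃e f⦄, e ≠ f → (∃ w, w ∈ ends e ∧ w ∈ ends f) → G.Reachable g e →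
      ¬ G.Reachable g f → ∀ ⦃γ⦄, c e = some (Equiv.swap a b γ) → c f ≠ some γ := by
    intro e f hne hshare hre hrf γ he hf
    by_cases hγ : γ = a ∨ γ = b
    · have he' : c e = some a ∨ c e = some b := by
        rcases hγ with rfl | rfl
        · rw [Equiv.swap_apply_left] at he
          exact Or.inr he
        · rw [Equiv.swap_apply_right] at he
          exact Or.inl he
      exact hrf (hre.trans (SimpleGraph.Adj.reachable
        ⟨hne, he', hγ.imp (fun h : γ = a => h ▸ hf) (fun h : γ = b => h ▸ hf), hshare⟩))
    · obtain ⟨hγa, hγb⟩ := not_or.mp hγ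
      rw [Equiv.swap_apply_of_ne_of_ne hγa hγb] at he
      exact hc hne hshare he hf
  intro e f hne hshare γ he hf
  by_cases hre : G.Reachable g e <;> by_cases hrf : G.Reachable g f
  · rw [kempeSwap_eq_some_iff_of_reachable hre] at he
    rw [kempeSwap_eq_some_iff_of_reachable hrf] at hf
    exact hc hne hshare he hf
  · rw [kempeSwap_eq_some_iff_of_reachable hre] at he
    rw [kempeSwap_of_not_reachable hrf] at hf
    exact key hne hshare hre hrf he hf
  · rw [kempeSwap_of_not_reachable hre] at he
    rw [kempeSwap_eq_some_iff_of_reachable hrf] at hf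
    obtain ⟨w, hwe, hwf⟩ := hshare
    exact key hne.symm ⟨w, hwf, hwe⟩ hrf hre hf he
  · rw [kempeSwap_of_not_reachable hre] at he
    rw [kempeSwap_of_not_reachable hrf] at hf
    exact hc hne hshare he hf

end Kempe

section Elementary

variable [Fintype E] [DecidableEq E] [DecidableEq α] {ends} {c : E → Option α} {e₀ : E} {u : V}

/-- If the Kempe chain through `g` avoided `u`, swapping it would make `b` missing at both `u`
and `v`; the fan survives the swap because, by induction, the chains from lower fan levels do
reach `u`. -/
lemma IsMinimal.exists_reachable_center_of_missing_fan (hmin : IsMinimal ends c) (he₀ : c e₀ = none)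
    (hu : u ∈ ends e₀) {n : ℕ} {f : E} (hf : FanN ends c e₀ u n f) {v : V} (hv : v ∈ ends f)
    (hvu : v ≠ u) {a b : α} (hva : Missing ends c v a) (hub : Missing ends c u b) {g : E}
    (hvg : v ∈ ends g) (hgb : c g = some b) :
    ∃ h, u ∈ ends h ∧ (kempeGraph ends c a b).Reachable g h := by
  induction n using Nat.strong_induction_on generalizing f v g with
  | _ n ih =>
  by_contra! hK
  set c' := kempeSwap ends c a b g
  have hc' : ∀ y, ¬ (kempeGraph ends c a b).Reachable g y → c' y = c y := fun _ hr =>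
    kempeSwap_of_not_reachable hr
  have hcu : ∀ h, u ∈ ends h → c' h = c h := fun h hh => hc' h (hK h hh)
  have hmin' : IsMinimal ends c' := hmin.of_uncolored_eq (hmin.1.kempeSwap g) uncolored_kempeSwap
  have hf' : FanN ends c' e₀ u n f := by
    refine FanN.of_recolor (fun x _ hx => hcu x hx) ?_ hf
    intro m hm g' w ε hg' hwg' hwu hwε hεu y hy hyε
    by_cases hr : (kempeGraph ends c a b).Reachable g y
    · rw [kempeSwap_eq_some_iff_of_reachable hr] at hyε
      have hεb : ε ≠ b := by rintro rfl; exact hεu hub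
      by_cases hεa : ε = a
      · rw [hεa, Equiv.swap_apply_left] at hyε
        obtain ⟨h, hhu, hyh⟩ := ih m hm hg' hwg' hwu (hεa ▸ hwε) hy hyε
        exact hK h hhu (hr.trans hyh)
      · rw [Equiv.swap_apply_of_ne_of_ne hεa hεb] at hyε
        exact hwε hy hyε
    · rw [hc' y hr] at hyε
      exact hwε hy hyε
  have hvb : Missing ends c' v b := by
    intro y hy hyb
    by_cases hr : (kempeGraph ends c a b).Reachable g y
    · rw [kempeSwap_eq_some_iff_of_reachable hr, Equiv.swap_apply_right] at hyb
      exact hva hy hyb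
    · rw [hc' y hr] at hyb
      exact hr (hmin.1.eq_of_mem_of_mem hvg hy hgb hyb ▸ SimpleGraph.Reachable.refl g)
  exact hmin'.not_missing_center_of_missing_fan (kempeSwap_eq_none_iff.mpr he₀) hu hf' hv hvu hvb
    fun y hy => hcu y hy ▸ hub hy

variable [DecidableEq V]

/-- The Kempe chains from the `β`-edges at `v` and `v'` both end at the unique `γ`-edge at `u`,
so this chain would have the three leaves `u`, `v`, `v'`. -/
lemma IsMinimal.not_missing_of_missing_fan (hloop : ∀ e, ¬ (ends e).IsDiag)
    (hmin : IsMinimal ends c) (he₀ : c e₀ = none) (hu : u ∈ ends e₀) {n n' : ℕ} {f f' : E}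
    (hf : FanN ends c e₀ u n f) (hf' : FanN ends c e₀ u n' f') {v v' : V} (hv : v ∈ ends f)
    (hvu : v ≠ u) (hv' : v' ∈ ends f') (hv'u : v' ≠ u) (hvv' : v ≠ v') {β : α}
    (hβ : Missing ends c u β) {γ : α} (hvγ : Missing ends c v γ) : ¬ Missing ends c v' γ := by
  intro hv'γ
  obtain ⟨g, hvg, hgβ⟩ := exists_of_not_missing fun h =>
    hmin.not_missing_center_of_missing_fan he₀ hu hf hv hvu h hβ
  obtain ⟨g', hv'g', hg'β⟩ := exists_of_not_missing fun h =>
    hmin.not_missing_center_of_missing_fan he₀ hu hf' hv' hv'u h hβ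
  obtain ⟨h, hhu, hgh⟩ :=
    hmin.exists_reachable_center_of_missing_fan he₀ hu hf hv hvu hvγ hβ hvg hgβ
  obtain ⟨h', hh'u, hg'h'⟩ :=
    hmin.exists_reachable_center_of_missing_fan he₀ hu hf' hv' hv'u hv'γ hβ hv'g' hg'β
  have hhγ : c h = some γ := (colored_of_reachable (Or.inr hgβ) hgh).resolve_right (hβ hhu)
  have hh'γ : c h' = some γ := (colored_of_reachable (Or.inr hg'β) hg'h').resolve_right (hβ hh'u)
  obtain rfl : h = h' := hmin.1.eq_of_mem_of_mem hhu hh'u hhγ hh'γ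
  have hK : ∀ {e x}, (kempeGraph ends c γ β).Reachable h e → x ∈ ends e →
      x ∈ verts ends (kempeChain ends c γ β h) := fun he hx =>
    mem_verts.mpr ⟨_, mem_kempeChain.mpr he, hx⟩
  have hthree : #({u, v, v'} : Finset V) ≤ 2 := by
    refine hmin.1.card_le_two_of_missing_kempeChain (b := β) hloop (Or.inl hhγ)
      (fun x hx => ?_) fun x hx => ?_
    all_goals
      simp only [mem_insert, mem_singleton] at hx
      rcases hx with rfl | rfl | rfl
    exacts [hK .rfl hhu, hK hgh.symm hvg, hK hg'h'.symm hv'g', Or.inr hβ, Or.inl hvγ, Or.inl hv'γ]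
  have := card_eq_three.mpr ⟨u, v, v', hvu.symm, hv'u.symm, hvv', rfl⟩
  omega

end Elementary

section FanCounting

variable [Fintype E] {ends} {c : E → Option α} {e₀ : E} {u : V}

variable (ends) in
noncomputable def fan (c : E → Option α) (e₀ : E) (u : V) : Finset E := by
  classical exact univ.filter fun f => ∃ n, FanN ends c e₀ u n f

lemma mem_fan {f : E} : f ∈ fan ends c e₀ u ↔ ∃ n, FanN ends c e₀ u n f := by
  simp [fan]

variable [DecidableEq V]

variable (ends) in
noncomputable def fanVertices (c : E → Option α) (e₀ : E) (u : V) : Finset V :=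
  (verts ends (fan ends c e₀ u)).erase u

lemma mem_fanVertices {z : V} : z ∈ fanVertices ends c e₀ u ↔
    z ≠ u ∧ ∃ n f, FanN ends c e₀ u n f ∧ z ∈ ends f := by
  simp only [fanVertices, mem_erase, mem_verts, mem_fan]
  constructor
  · rintro ⟨hzu, f, ⟨n, hn⟩, hzf⟩
    exact ⟨hzu, n, f, hn, hzf⟩
  · rintro ⟨hzu, n, f, hn, hzf⟩
    exact ⟨hzu, f, ⟨n, hn⟩, hzf⟩

variable [DecidableEq E]

lemma card_fan_le (hloop : ∀ e, ¬ (ends e).IsDiag) {μ : ℕ}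
    (hmul : ∀ s, #(univ.filter (ends · = s)) ≤ μ) (hu : u ∈ ends e₀) :
    #(fan ends c e₀ u) ≤ #(fanVertices ends c e₀ u) * μ := by
  calc #(fan ends c e₀ u)
      ≤ #((fanVertices ends c e₀ u).biUnion fun z => univ.filter (ends · = s(u, z))) := by
        refine card_le_card fun f hf => ?_
        obtain ⟨n, hn⟩ := mem_fan.mp hf
        have hfu := hn.mem_center hu
        refine mem_biUnion.mpr ⟨Sym2.Mem.other hfu, ?_, ?_⟩
        · exact mem_erase.mpr ⟨Sym2.other_ne (hloop f) _, mem_verts.mpr ⟨f, hf, Sym2.other_mem _⟩⟩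
        · exact mem_filter.mpr ⟨mem_univ _, (Sym2.other_spec _).symm⟩
    _ ≤ ∑ z ∈ fanVertices ends c e₀ u, #(univ.filter (ends · = s(u, z))) := card_biUnion_le
    _ ≤ #(fanVertices ends c e₀ u) * μ := by
        simpa using sum_le_card_nsmul _ _ μ fun z _ => hmul s(u, z)

variable [DecidableEq α]

lemma IsMinimal.pairwiseDisjoint_missingColors [Fintype α] (hloop : ∀ e, ¬ (ends e).IsDiag)
    (hmin : IsMinimal ends c) (he₀ : c e₀ = none) (hu : u ∈ ends e₀) {β : α}
    (hβ : Missing ends c u β) :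
    (fanVertices ends c e₀ u : Set V).PairwiseDisjoint (missingColors ends c) := by
  intro z hz z' hz' hzz'
  obtain ⟨hzu, n, f, hn, hzf⟩ := mem_fanVertices.mp hz
  obtain ⟨hz'u, n', f', hn', hz'f'⟩ := mem_fanVertices.mp hz'
  exact disjoint_left.mpr fun γ hγ hγ' => hmin.not_missing_of_missing_fan hloop he₀ hu hn hn'
    hzf hzu hz'f' hz'u hzz' hβ (mem_missingColors.mp hγ) (mem_missingColors.mp hγ')

lemma IsMinimal.card_biUnion_missingColors_le [Fintype α] (hmin : IsMinimal ends c)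
    (he₀ : c e₀ = none) (hu : u ∈ ends e₀) :
    #((fanVertices ends c e₀ u).biUnion (missingColors ends c)) ≤
      #((fan ends c e₀ u).erase e₀) := by
  refine card_le_card_of_forall_exists_eq_some (c := c) fun γ hγ => ?_
  obtain ⟨z, hz, hγz⟩ := mem_biUnion.mp hγ
  obtain ⟨hzu, n, f, hn, hzf⟩ := mem_fanVertices.mp hz
  rw [mem_missingColors] at hγz
  obtain ⟨h, hhu, hhγ⟩ :=
    exists_of_not_missing (hmin.not_missing_center_of_missing_fan he₀ hu hn hzf hzu hγz)
  have hhe₀ : h ≠ e₀ := by rintro rfl; simp [he₀] at hhγ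
  have hhF : h ∈ fan ends c e₀ u :=
    mem_fan.mpr ⟨n + 1, Or.inr ⟨hhu, γ, hhγ, f, z, hn, hzf, hzu, hγz⟩⟩
  exact ⟨h, mem_erase.mpr ⟨hhe₀, hhF⟩, hhγ⟩

theorem IsMinimal.uncolored_eq_empty [Fintype α] (hloop : ∀ e, ¬ (ends e).IsDiag) {D μ : ℕ}
    (hdeg : ∀ v, #(univ.filter (v ∈ ends ·)) ≤ D) (hmul : ∀ s, #(univ.filter (ends · = s)) ≤ μ)
    (hα : D + μ ≤ Fintype.card α) (hmin : IsMinimal ends c) : uncolored c = ∅ := by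
  by_contra hne
  obtain ⟨e₀, he₀⟩ := nonempty_iff_ne_empty.mpr hne
  rw [mem_uncolored] at he₀
  have hmissing : ∀ x ∈ ends e₀, μ + 1 ≤ #(missingColors ends c x) := fun x hx => by
    have := le_card_missingColors c (hdeg x) hα
    have : 0 < #(univ.filter (x ∈ ends ·) ∩ uncolored c) := card_pos.mpr ⟨e₀, by simp [hx, he₀]⟩
    omega
  obtain ⟨u, v₀, hu, hv₀, hv₀u⟩ : ∃ u v₀, u ∈ ends e₀ ∧ v₀ ∈ ends e₀ ∧ v₀ ≠ u :=
    Sym2.inductionOn (ends e₀) (fun x y hxy => ⟨x, y, Sym2.mem_mk_left x y, Sym2.mem_mk_right x y,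
      fun h => hxy (Sym2.mk_isDiag_iff.mpr h.symm)⟩) (hloop e₀)
  obtain ⟨β, hβ⟩ := card_pos.mp ((Nat.succ_pos μ).trans_le (hmissing u hu))
  have he₀F : e₀ ∈ fan ends c e₀ u := mem_fan.mpr ⟨0, rfl⟩
  have := card_erase_of_mem he₀F
  have := card_pos.mpr ⟨e₀, he₀F⟩
  have := hmin.card_biUnion_missingColors_le he₀ hu
  have := card_fan_le hloop hmul hu (c := c)
  have := card_biUnion (hmin.pairwiseDisjoint_missingColors hloop he₀ hu (mem_missingColors.mp hβ))
  set Z := fanVertices ends c e₀ u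
  have hlow : #Z * μ + 1 ≤ ∑ z ∈ Z, #(missingColors ends c z) := by
    have hv₀Z : v₀ ∈ Z := mem_fanVertices.mpr ⟨hv₀u, 0, e₀, rfl, hv₀⟩
    calc #Z * μ + 1 = ∑ z ∈ Z, (μ + if z = v₀ then 1 else 0) := by
          rw [sum_add_distrib, sum_ite_eq', if_pos hv₀Z, sum_const, smul_eq_mul]
      _ ≤ ∑ z ∈ Z, #(missingColors ends c z) := sum_le_sum fun z _ => by
          split_ifs with h
          · exact h ▸ hmissing v₀ hv₀
          · exact (Nat.le_add_right μ _).trans (le_card_missingColors c (hdeg z) hα)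
  omega

end FanCounting

end VizingMultigraph

theorem stmt_1_general {V E : Type*} [Fintype E] [DecidableEq V]
    (ends : E → Sym2 V) (hloop : ∀ e : E, ¬ (ends e).IsDiag)
    (D μ : ℕ)
    (hdeg : ∀ v : V, (Finset.univ.filter fun e : E => v ∈ ends e).card ≤ D)
    (hmul : ∀ s : Sym2 V, (Finset.univ.filter fun e : E => ends e = s).card ≤ μ) :
    ∃ c : E → Fin (D + μ), ∀ e f : E, e ≠ f → c e = c f →
      ∀ v : V, v ∈ ends e → v ∉ ends f := by
  classical
  obtain ⟨c, hmin⟩ := VizingMultigraph.exists_isMinimal ends (α := Fin (D + μ))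
  have hcolored : ∀ e, (c e).isSome := fun e => by
    simpa [Option.isSome_iff_ne_none] using
      (eq_empty_iff_forall_notMem.mp (hmin.uncolored_eq_empty hloop hdeg hmul (by simp)) e)
  refine ⟨fun e => (c e).get (hcolored e), fun e f hne hef v hve hvf => ?_⟩
  exact hmin.1 hne ⟨v, hve, hvf⟩ (Option.some_get _).symm
    ((Option.some_get (hcolored f)).symm.trans (congrArg some hef.symm))

/-- Vizing's theorem for multigraphs: a multigraph with maximum degree at most `D` and
edge multiplicity at most `μ` decomposes into at most `D + μ` matchings (i.e. admits a
proper edge coloring with `D + μ` colors). -/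
theorem stmt_1 {V E : Type*} [Fintype V] [Fintype E] [DecidableEq V]
    (ends : E → Sym2 V) (hloop : ∀ e : E, ¬ (ends e).IsDiag)
    (D μ : ℕ)
    (hdeg : ∀ v : V, (Finset.univ.filter fun e : E => v ∈ ends e).card ≤ D)
    (hmul : ∀ s : Sym2 V, (Finset.univ.filter fun e : E => ends e = s).card ≤ μ) :
    ∃ c : E → Fin (D + μ), ∀ e f : E, e ≠ f → c e = c f →
      ∀ v : V, v ∈ ends e → v ∉ ends f :=
  stmt_1_general ends hloop D μ hdeg hmul
end

section
/- Let G be a graph and V₀ a set of vertices such that G[V₀] is empty, every edge of G has exactly one endpoint in V₀, and every vertex of V₀ has degree at most d in G. If t ≥ d + 2·|V₀| + 1, then the edge set of G can be partitioned into at most t sets P₁,…,P_t, each of which is a collection of vertex-disjoint paths of length 2 whose internal vertex lies in V₀ and whose endpoints lie outside V₀, possibly together with at most one single edge per vertex of odd degree. -/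
open SimpleGraph Finset

/-!
Pair up the (evenly many) neighbours of each centre `x ∈ V₀`; each pair `{y, z}` gives a path
`yxz`, and these paths partition the edges. Call two paths in conflict when they share a vertex.
Since centres lie in `V₀` and endpoints outside it, a path `yxz` can only conflict with the at
most `deg x ≤ d` paths centred at `x`, and with paths having `y` or `z` as an endpoint, of which
there are at most `|V₀|` each: one per centre, because the pairing at a centre is a matching.
So every path has fewer than `t` conflicts, and a greedy colouring with `t` colours yields the
classes `P j`.
-/

/-- The pairs are ordered so that each path `yxz` built from them has a single encoding
`(y, x, z)`. -/
structure IsPairing {α : Type*} (S : Finset α) (P : Finset (α × α)) : Prop where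
  fst_mem : ∀ p ∈ P, p.1 ∈ S
  snd_mem : ∀ p ∈ P, p.2 ∈ S
  fst_ne_snd : ∀ p ∈ P, p.1 ≠ p.2
  existsUnique : ∀ a ∈ S, ∃! p, p ∈ P ∧ (a = p.1 ∨ a = p.2)

namespace IsPairing

variable {α : Type*} {S : Finset α} {P : Finset (α × α)}

theorem eq_of_mem (h : IsPairing S P) {p q : α × α} (hp : p ∈ P) (hq : q ∈ P) {a : α}
    (hpa : a = p.1 ∨ a = p.2) (hqa : a = q.1 ∨ a = q.2) : p = q := by
  have ha : a ∈ S := by rcases hpa with rfl | rfl <;> simp [h.fst_mem, h.snd_mem, hp]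
  exact (h.existsUnique a ha).unique ⟨hp, hpa⟩ ⟨hq, hqa⟩

theorem insert [DecidableEq α] (h : IsPairing S P) {a b : α} (hab : a ≠ b) (ha : a ∉ S)
    (hb : b ∉ S) :
    IsPairing (insert a (insert b S)) (insert (a, b) P) where
  fst_mem p hp := by rcases mem_insert.1 hp with rfl | hp <;> simp [h.fst_mem, *]
  snd_mem p hp := by rcases mem_insert.1 hp with rfl | hp <;> simp [h.snd_mem, *]
  fst_ne_snd p hp := by rcases mem_insert.1 hp with rfl | hp <;> simp [h.fst_ne_snd, *]
  existsUnique c hc := by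
    have hP : ∀ p ∈ P, p.1 ≠ a ∧ p.1 ≠ b ∧ p.2 ≠ a ∧ p.2 ≠ b := fun p hp => by
      refine ⟨?_, ?_, ?_, ?_⟩ <;> rintro rfl <;> simp_all [h.fst_mem, h.snd_mem]
    rcases mem_insert.1 hc with rfl | hc
    · refine ⟨(c, b), by simp, fun q ⟨hq, hcq⟩ => ?_⟩
      rcases mem_insert.1 hq with rfl | hq
      · rfl
      · have := hP q hq; grind
    rcases mem_insert.1 hc with rfl | hc
    · refine ⟨(a, c), by simp, fun q ⟨hq, hcq⟩ => ?_⟩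
      rcases mem_insert.1 hq with rfl | hq
      · rfl
      · have := hP q hq; grind
    obtain ⟨p, ⟨hp, hcp⟩, hu⟩ := h.existsUnique c hc
    refine ⟨p, ⟨mem_insert_of_mem hp, hcp⟩, fun q ⟨hq, hcq⟩ => ?_⟩
    rcases mem_insert.1 hq with rfl | hq
    · rcases hcq with rfl | rfl <;> contradiction
    · exact hu q ⟨hq, hcq⟩

end IsPairing

theorem exists_isPairing_of_even_card {α : Type*} [DecidableEq α] {S : Finset α}
    (hS : Even #S) : ∃ P, IsPairing S P := by
  induction S using Finset.strongInduction with
  | H S ih =>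
  obtain rfl | ⟨a, ha⟩ := S.eq_empty_or_nonempty
  · exact ⟨∅, by constructor <;> simp⟩
  obtain ⟨b, hb⟩ : (S.erase a).Nonempty := by
    rw [← card_pos, card_erase_of_mem ha]
    obtain ⟨k, hk⟩ := hS
    have := card_pos.2 ⟨a, ha⟩
    omega
  have hsub : (S.erase a).erase b ⊂ S := (erase_subset _ _).trans_ssubset (erase_ssubset ha)
  obtain ⟨P, hP⟩ := ih _ hsub (by
    rw [card_erase_of_mem hb, card_erase_of_mem ha]
    obtain ⟨k, hk⟩ := hS
    exact ⟨k - 1, by omega⟩)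
  refine ⟨insert (a, b) P, ?_⟩
  simpa [insert_erase hb, insert_erase ha] using
    hP.insert (ne_of_mem_erase hb).symm (by simp) (by simp)

theorem SimpleGraph.exists_coloring_on_of_card_adj_lt {α : Type*} [DecidableEq α]
    (H : SimpleGraph α) [DecidableRel H.Adj] {t : ℕ} [NeZero t] (A : Finset α)
    (hA : ∀ p ∈ A, #{q ∈ A | H.Adj p q} < t) :
    ∃ c : α → Fin t, ∀ p ∈ A, ∀ q ∈ A, H.Adj p q → c p ≠ c q := by
  induction A using Finset.induction_on with
  | empty => exact ⟨0, by simp⟩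
  | @insert a s ha ih =>
    obtain ⟨c, hc⟩ := ih fun p hp =>
      (card_le_card (filter_subset_filter _ (subset_insert a s))).trans_lt
        (hA p (mem_insert_of_mem hp))
    have hfree : #({q ∈ s | H.Adj a q}.image c) < #(univ : Finset (Fin t)) :=
      calc #({q ∈ s | H.Adj a q}.image c)
          ≤ #{q ∈ insert a s | H.Adj a q} :=
            card_image_le.trans (card_le_card (filter_subset_filter _ (subset_insert a s)))
        _ < t := hA a (mem_insert_self a s)
        _ = _ := by simp
    obtain ⟨j, -, hj⟩ := exists_mem_notMem_of_card_lt_card hfree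
    have hj' : ∀ q ∈ s, H.Adj a q → j ≠ c q := fun q hq hadj hjq =>
      hj (mem_image.2 ⟨q, mem_filter.2 ⟨hq, hadj⟩, hjq.symm⟩)
    have hupd : ∀ q ∈ s, Function.update c a j q = c q := fun q hq =>
      Function.update_of_ne (ne_of_mem_of_not_mem hq ha) _ _
    refine ⟨Function.update c a j, fun p hp q hq hpq => ?_⟩
    rcases mem_insert.1 hp with rfl | hps <;> rcases mem_insert.1 hq with rfl | hqs
    · exact (H.irrefl hpq).elim
    · simpa [hupd q hqs] using hj' q hqs hpq
    · simpa [hupd p hps] using (hj' p hps hpq.symm).symm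
    · simpa [hupd p hps, hupd q hqs] using hc p hps q hqs hpq

def pathVerts {V : Type*} [DecidableEq V] (p : V × V × V) : Finset V := {p.1, p.2.1, p.2.2}

def pathConflict (V : Type*) [DecidableEq V] : SimpleGraph (V × V × V) :=
  .fromRel fun p q => ¬Disjoint (pathVerts p) (pathVerts q)

instance {V : Type*} [DecidableEq V] : DecidableRel (pathConflict V).Adj :=
  fun p q => inferInstanceAs (Decidable (p ≠ q ∧ (_ ∨ _)))

def cherries {V : Type*} [DecidableEq V] (V₀ : Finset V) (F : V → Finset (V × V)) :
    Finset (V × V × V) :=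
  V₀.biUnion fun x => (F x).image fun p => (p.1, x, p.2)

section Cherries

variable {V : Type*} [DecidableEq V] {V₀ : Finset V} {F : V → Finset (V × V)}

theorem mem_cherries {q : V × V × V} :
    q ∈ cherries V₀ F ↔ q.2.1 ∈ V₀ ∧ (q.1, q.2.2) ∈ F q.2.1 := by
  simp only [cherries, mem_biUnion, mem_image]
  constructor
  · rintro ⟨x, hx, p, hp, rfl⟩
    exact ⟨hx, hp⟩
  · rintro ⟨hx, hq⟩
    exact ⟨_, hx, _, hq, rfl⟩

variable [Fintype V] {G : SimpleGraph V} [DecidableRel G.Adj]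
  (hF : ∀ x ∈ V₀, IsPairing (G.neighborFinset x) (F x))
include hF

theorem eq_of_mem_cherries {p q : V × V × V} (hp : p ∈ cherries V₀ F)
    (hq : q ∈ cherries V₀ F) (hcenter : p.2.1 = q.2.1) {a : V}
    (hpa : a = p.1 ∨ a = p.2.2) (hqa : a = q.1 ∨ a = q.2.2) : p = q := by
  obtain ⟨hx, hp⟩ := mem_cherries.1 hp
  obtain ⟨-, hq⟩ := mem_cherries.1 hq
  rw [← hcenter] at hq
  have := (hF _ hx).eq_of_mem hp hq hpa hqa
  simp only [Prod.mk.injEq] at this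
  ext <;> simp [this, hcenter]

theorem card_cherries_center_le (x : V) :
    #{q ∈ cherries V₀ F | q.2.1 = x} ≤ G.degree x := by
  rw [← card_neighborFinset_eq_degree]
  refine card_le_card_of_injOn (·.1) (fun q hq => ?_) fun q hq q' hq' h => ?_
  · obtain ⟨hqC, rfl⟩ := mem_filter.1 hq
    obtain ⟨hx, hF'⟩ := mem_cherries.1 hqC
    exact (hF _ hx).fst_mem _ hF'
  · obtain ⟨hqC, rfl⟩ := mem_filter.1 hq
    obtain ⟨hqC', hc⟩ := mem_filter.1 hq'
    exact eq_of_mem_cherries hF hqC hqC' hc.symm (Or.inl rfl) (Or.inl h)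

theorem card_cherries_endpoint_le (a : V) :
    #{q ∈ cherries V₀ F | a = q.1 ∨ a = q.2.2} ≤ #V₀ := by
  refine card_le_card_of_injOn (·.2.1) (fun q hq => ?_) fun q hq q' hq' h => ?_
  · exact (mem_cherries.1 (mem_filter.1 hq).1).1
  · obtain ⟨hq, ha⟩ := mem_filter.1 hq
    obtain ⟨hq', ha'⟩ := mem_filter.1 hq'
    exact eq_of_mem_cherries hF hq hq' h ha ha'

variable (hempty : ∀ x ∈ V₀, ∀ y ∈ V₀, ¬G.Adj x y)
include hempty

theorem of_mem_cherries {q : V × V × V} (hq : q ∈ cherries V₀ F) :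
    q.1 ∉ V₀ ∧ q.2.1 ∈ V₀ ∧ q.2.2 ∉ V₀ ∧ q.1 ≠ q.2.2 ∧ G.Adj q.2.1 q.1 ∧ G.Adj q.2.1 q.2.2 := by
  obtain ⟨hx, hq⟩ := mem_cherries.1 hq
  have h₁ := (mem_neighborFinset _ _ _).1 ((hF _ hx).fst_mem _ hq)
  have h₂ := (mem_neighborFinset _ _ _).1 ((hF _ hx).snd_mem _ hq)
  exact ⟨fun h => hempty _ hx _ h h₁, hx, fun h => hempty _ hx _ h h₂,
    (hF _ hx).fst_ne_snd _ hq, h₁, h₂⟩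

theorem card_pathConflict_adj_cherries_le {d : ℕ} (hdeg : ∀ x ∈ V₀, G.degree x ≤ d)
    {p : V × V × V} (hp : p ∈ cherries V₀ F) :
    #{q ∈ cherries V₀ F | (pathConflict V).Adj p q} ≤ d + 2 * #V₀ := by
  set C := cherries V₀ F
  have hsub : {q ∈ C | (pathConflict V).Adj p q} ⊆ {q ∈ C | q.2.1 = p.2.1} ∪
      {q ∈ C | p.1 = q.1 ∨ p.1 = q.2.2} ∪ {q ∈ C | p.2.2 = q.1 ∨ p.2.2 = q.2.2} := by
    intro q hq
    obtain ⟨hqC, hadj⟩ := mem_filter.1 hq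
    have := of_mem_cherries hF hempty hp
    have := of_mem_cherries hF hempty hqC
    simp only [pathConflict, fromRel_adj, pathVerts, not_disjoint_iff, mem_insert,
      mem_singleton] at hadj
    simp only [mem_union, mem_filter]
    grind
  calc #{q ∈ C | (pathConflict V).Adj p q}
      ≤ #{q ∈ C | q.2.1 = p.2.1} + #{q ∈ C | p.1 = q.1 ∨ p.1 = q.2.2} +
          #{q ∈ C | p.2.2 = q.1 ∨ p.2.2 = q.2.2} :=
        (card_le_card hsub).trans <| (card_union_le _ _).trans <|
          Nat.add_le_add_right (card_union_le _ _) _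
    _ ≤ d + #V₀ + #V₀ := by
        gcongr
        · exact (card_cherries_center_le hF _).trans (hdeg _ (mem_cherries.1 hp).1)
        · exact card_cherries_endpoint_le hF _
        · exact card_cherries_endpoint_le hF _
    _ = d + 2 * #V₀ := by ring

theorem existsUnique_mem_cherries_of_adj {x y : V} (hx : x ∈ V₀) (hxy : G.Adj x y) :
    ∃! q, q ∈ cherries V₀ F ∧ (s(x, y) = s(q.2.1, q.1) ∨ s(x, y) = s(q.2.1, q.2.2)) := by
  obtain ⟨r, ⟨hr, hyr⟩, -⟩ := (hF x hx).existsUnique y (by simpa using hxy)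
  have hmem : (r.1, x, r.2) ∈ cherries V₀ F := mem_cherries.2 ⟨hx, hr⟩
  refine ⟨(r.1, x, r.2), ⟨hmem, by rcases hyr with rfl | rfl <;> simp⟩, fun q ⟨hq, he⟩ => ?_⟩
  obtain ⟨hq₁, -, hq₂, -⟩ := of_mem_cherries hF hempty hq
  have hcenter : q.2.1 = x ∧ (y = q.1 ∨ y = q.2.2) := by
    simp only [Sym2.eq_iff] at he
    grind
  exact eq_of_mem_cherries hF hq hmem hcenter.1 hcenter.2 hyr

end Cherries

/-- If `G[V₀]` is empty, every edge of `G` has exactly one endpoint in `V₀`, every vertex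
of `V₀` has even degree at most `d`, and `t ≥ d + 2|V₀| + 1`, then `E(G)` partitions into
at most `t` sets, each a collection of vertex-disjoint paths of length 2 with internal
vertex in `V₀` and endpoints outside `V₀`. A triple `(y, x, z)` encodes the path `yxz`. -/
theorem stmt_2 {V : Type*} [Fintype V] [DecidableEq V] (G : SimpleGraph V)
    [DecidableRel G.Adj] (V₀ : Finset V) (d t : ℕ)
    (hempty : ∀ x ∈ V₀, ∀ y ∈ V₀, ¬ G.Adj x y)
    (hexc : ∀ e ∈ G.edgeFinset, ∃ x y : V, e = s(x, y) ∧ x ∈ V₀ ∧ y ∉ V₀)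
    (hdeg : ∀ x ∈ V₀, G.degree x ≤ d)
    (heven : ∀ x ∈ V₀, Even (G.degree x))
    (ht : d + 2 * V₀.card + 1 ≤ t) :
    ∃ P : Fin t → Finset (V × V × V),
      (∀ j, ∀ p ∈ P j, p.1 ∉ V₀ ∧ p.2.1 ∈ V₀ ∧ p.2.2 ∉ V₀ ∧ p.1 ≠ p.2.2 ∧
        G.Adj p.2.1 p.1 ∧ G.Adj p.2.1 p.2.2) ∧
      (∀ j, ∀ p ∈ P j, ∀ q ∈ P j, p ≠ q →
        ({p.1, p.2.1, p.2.2} : Finset V) ∩ ({q.1, q.2.1, q.2.2} : Finset V) = ∅) ∧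
      (∀ e ∈ G.edgeFinset, ∃! jp : Fin t × (V × V × V), jp.2 ∈ P jp.1 ∧
        (e = s(jp.2.2.1, jp.2.1) ∨ e = s(jp.2.2.1, jp.2.2.2))) := by
  choose F hF using fun x => if hx : x ∈ V₀ then
    (exists_isPairing_of_even_card (G.card_neighborFinset_eq_degree x ▸ heven x hx)).imp
      fun _ hP _ => hP
    else ⟨∅, fun h => absurd h hx⟩
  set C := cherries V₀ F
  have : NeZero t := ⟨by omega⟩
  obtain ⟨c, hc⟩ := (pathConflict V).exists_coloring_on_of_card_adj_lt C fun p hp =>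
    (card_pathConflict_adj_cherries_le hF hempty hdeg hp).trans_lt (by omega : d + 2 * #V₀ < t)
  refine ⟨fun j => {q ∈ C | c q = j}, fun j p hp => of_mem_cherries hF hempty (mem_filter.1 hp).1,
    fun j p hp q hq hpq => ?_, fun e he => ?_⟩
  · obtain ⟨hpC, rfl⟩ := mem_filter.1 hp
    obtain ⟨hqC, hcq⟩ := mem_filter.1 hq
    rw [← disjoint_iff_inter_eq_empty]
    by_contra h
    exact hc p hpC q hqC ⟨hpq, Or.inl h⟩ hcq.symm
  · obtain ⟨x, y, rfl, hx, -⟩ := hexc e he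
    obtain ⟨q, ⟨hq, hqe⟩, huniq⟩ :=
      existsUnique_mem_cherries_of_adj hF hempty hx (by simpa using he)
    refine ⟨(c q, q), ⟨mem_filter.2 ⟨hq, rfl⟩, hqe⟩, ?_⟩
    rintro ⟨j, q'⟩ ⟨hq', hq'e⟩
    obtain ⟨hq'C, hj⟩ := mem_filter.1 hq'
    obtain rfl := huniq q' ⟨hq'C, hq'e⟩
    exact Prod.ext hj.symm rfl
end
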